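/- Let μ > 0, M ∈ ℝ, and set β₀ = 2μ(1 − e^{−M/(2μ)}). Let β₁ ∈ ℝ and τ ∈ ℝ be such that D(ξ,τ) = 1 − (β₀/(2μ)) ∫_{−∞}^ξ φ₀(y) dy − (β₁/(2μ)) e^{−τ/2} φ₀(ξ) > 0 for all ξ ∈ ℝ. Then the diffusive N-wave w_N(·,τ) = (β₀ φ₀ + β₁ e^{−τ/2} φ₁)/D(·,τ) is integrable on ℝ and ∫_ℝ w_N(ξ,τ) dξ = M; in particular the mass is independent of τ and of β₁. -/

import Mathlib

open MeasureTheory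

/-- The Gaussian `φ₀(ξ) = (4πμ)^{−1/2} e^{−ξ²/(4μ)}`. -/
noncomputable def phi0 (μ ξ : ℝ) : ℝ :=
  (Real.sqrt (4 * Real.pi * μ))⁻¹ * Real.exp (-ξ ^ 2 / (4 * μ))

/-- The denominator of the diffusive N-wave:
`D(ξ,τ) = 1 − (β₀/(2μ)) ∫_{−∞}^ξ φ₀ − (β₁/(2μ)) e^{−τ/2} φ₀(ξ)`. -/
noncomputable def Dden (μ β₀ β₁ ξ τ : ℝ) : ℝ :=
  1 - β₀ / (2 * μ) * (∫ y in Set.Iio ξ, phi0 μ y) - β₁ / (2 * μ) * Real.exp (-τ / 2) * phi0 μ ξ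

/-- The diffusive N-wave `w_N(ξ,τ) = (β₀ φ₀(ξ) + β₁ e^{−τ/2} φ₁(ξ)) / D(ξ,τ)`, `φ₁ = φ₀'`. -/
noncomputable def wN (μ β₀ β₁ ξ τ : ℝ) : ℝ :=
  (β₀ * phi0 μ ξ + β₁ * Real.exp (-τ / 2) * deriv (phi0 μ) ξ) / Dden μ β₀ β₁ ξ τ

/-!
Since `∂_ξ D = -(β₀ φ₀ + β₁ e^{-τ/2} φ₁) / (2μ)`, the N-wave is the logarithmic derivative
`w_N = -2μ ∂_ξ log D`. As `D → 1` at `-∞` and `D → 1 - β₀/(2μ) = e^{-M/(2μ)}` at `+∞`, its mass is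
`-2μ (log e^{-M/(2μ)} - log 1) = M`. Integrability holds because a continuous positive function
with positive limits at `±∞` is bounded below by a positive constant.
-/

open Filter Set Topology

section IntegralLemmas

variable {f f' : ℝ → ℝ}

theorem tendsto_integral_Iio_atTop (hf : Integrable f) :
    Tendsto (fun x => ∫ y in Iio x, f y) atTop (𝓝 (∫ y, f y)) :=
  (aecover_Iio tendsto_id).integral_tendsto_of_countably_generated hf

theorem hasDerivAt_integral_Iio (hf : Integrable f) (hcont : Continuous f) (x : ℝ) :
    HasDerivAt (fun x => ∫ y in Iio x, f y) (f x) x := by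
  have hsplit :
      (fun x => ∫ y in Iio x, f y) = fun x => (∫ y in Iic 0, f y) + ∫ y in 0..x, f y := by
    funext x
    rw [← integral_Iic_eq_integral_Iio,
      ← intervalIntegral.integral_Iic_sub_Iic hf.integrableOn hf.integrableOn]
    ring
  rw [hsplit]
  exact (intervalIntegral.integral_hasDerivAt_right hf.intervalIntegrable
    (hcont.stronglyMeasurableAtFilter _ _) hcont.continuousAt).const_add _

theorem Continuous.exists_pos_forall_le_of_tendsto (hf : Continuous f) (hpos : ∀ x, 0 < f x)
    {a b : ℝ} (ha : 0 < a) (hb : 0 < b) (hbot : Tendsto f atBot (𝓝 a))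
    (htop : Tendsto f atTop (𝓝 b)) : ∃ ε > 0, ∀ x, ε ≤ f x := by
  set c := min a b / 2
  have hc : 0 < c := by positivity
  have hfar : ∀ᶠ x in cocompact ℝ, c ≤ f x := by
    rw [cocompact_eq_atBot_atTop]
    refine eventually_sup.2 ⟨hbot.eventually (eventually_ge_nhds ?_),
      htop.eventually (eventually_ge_nhds ?_)⟩ <;> grind
  -- `min f c` is constant far out, so the extreme value theorem applies to it
  obtain ⟨x₀, hx₀⟩ := (hf.min continuous_const).exists_forall_le' (f := fun x => min (f x) c) 0
    (hfar.mono fun x hx => by simp [hx])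
  exact ⟨min (f x₀) c, lt_min (hpos x₀) hc, fun x => (hx₀ x).trans (min_le_left _ _)⟩

theorem integrable_div_and_integral_div_eq_log_sub_log (hf : ∀ x, HasDerivAt f (f' x) x)
    (hpos : ∀ x, 0 < f x) (hf' : Integrable f') {a b : ℝ} (ha : 0 < a) (hb : 0 < b)
    (hbot : Tendsto f atBot (𝓝 a)) (htop : Tendsto f atTop (𝓝 b)) :
    Integrable (fun x => f' x / f x) ∧ ∫ x, f' x / f x = Real.log b - Real.log a := by
  have hcont : Continuous f := continuous_iff_continuousAt.2 fun x => (hf x).continuousAt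
  obtain ⟨ε, hε, hεle⟩ := hcont.exists_pos_forall_le_of_tendsto hpos ha hb hbot htop
  have hint : Integrable (fun x => f' x / f x) := by
    simp_rw [div_eq_mul_inv]
    refine hf'.mul_bdd (c := ε⁻¹) (hcont.inv₀ fun x => (hpos x).ne').aestronglyMeasurable
      (.of_forall fun x => ?_)
    rw [norm_inv, Real.norm_of_nonneg (hpos x).le]
    exact inv_anti₀ hε (hεle x)
  refine ⟨hint, integral_of_hasDerivAt_of_tendsto (f := fun x => Real.log (f x))
    (fun x => ?_) hint ?_ ?_⟩
  · exact (hf x).log (hpos x).ne'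
  · exact (Real.continuousAt_log ha.ne').tendsto.comp hbot
  · exact (Real.continuousAt_log hb.ne').tendsto.comp htop

end IntegralLemmas

section Gaussian

theorem phi0_eq_const_mul_exp (μ : ℝ) :
    phi0 μ = fun ξ => (Real.sqrt (4 * Real.pi * μ))⁻¹ * Real.exp (-(4 * μ)⁻¹ * ξ ^ 2) := by
  funext ξ
  rw [phi0, neg_div, div_eq_inv_mul, neg_mul]

theorem continuous_phi0 (μ : ℝ) : Continuous (phi0 μ) := by
  rw [phi0_eq_const_mul_exp]
  fun_prop

theorem hasDerivAt_phi0 (μ ξ : ℝ) : HasDerivAt (phi0 μ) (-(ξ / (2 * μ)) * phi0 μ ξ) ξ := by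
  have h := ((hasDerivAt_pow 2 ξ).const_mul (-(4 * μ)⁻¹)).exp.const_mul
    (Real.sqrt (4 * Real.pi * μ))⁻¹
  rw [phi0_eq_const_mul_exp]
  refine h.congr_deriv ?_
  push_cast
  ring

variable {μ : ℝ} (hμ : 0 < μ)
include hμ

theorem integrable_phi0 : Integrable (phi0 μ) := by
  rw [phi0_eq_const_mul_exp]
  exact (integrable_exp_neg_mul_sq (by positivity)).const_mul _

theorem integral_phi0 : ∫ ξ, phi0 μ ξ = 1 := by
  rw [phi0_eq_const_mul_exp, integral_const_mul, integral_gaussian, div_inv_eq_mul,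
    show Real.pi * (4 * μ) = 4 * Real.pi * μ by ring]
  exact inv_mul_cancel₀ (by positivity)

theorem integrable_deriv_phi0 : Integrable (deriv (phi0 μ)) := by
  have hderiv : deriv (phi0 μ) = fun ξ =>
      (-(2 * μ)⁻¹ * (Real.sqrt (4 * Real.pi * μ))⁻¹) * (ξ * Real.exp (-(4 * μ)⁻¹ * ξ ^ 2)) := by
    funext ξ
    rw [(hasDerivAt_phi0 μ ξ).deriv, phi0_eq_const_mul_exp]
    ring
  rw [hderiv]
  exact (integrable_mul_exp_neg_mul_sq (by positivity)).const_mul _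

theorem tendsto_phi0_cocompact : Tendsto (phi0 μ) (cocompact ℝ) (𝓝 0) := by
  have := tendsto_rpow_abs_mul_exp_neg_mul_sq_cocompact (a := (4 * μ)⁻¹) (by positivity) 0
  rw [phi0_eq_const_mul_exp]
  simpa using this.const_mul (Real.sqrt (4 * Real.pi * μ))⁻¹

end Gaussian

section Denominator

variable {μ : ℝ} (β₀ β₁ τ : ℝ) (hμ : 0 < μ)
include hμ

theorem hasDerivAt_Dden (ξ : ℝ) :
    HasDerivAt (fun ξ => Dden μ β₀ β₁ ξ τ)
      (-(β₀ * phi0 μ ξ + β₁ * Real.exp (-τ / 2) * deriv (phi0 μ) ξ) / (2 * μ)) ξ := by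
  have hΦ := hasDerivAt_integral_Iio (integrable_phi0 hμ) (continuous_phi0 μ) ξ
  have hφ := (hasDerivAt_phi0 μ ξ).differentiableAt.hasDerivAt
  exact (((hΦ.const_mul (β₀ / (2 * μ))).const_sub 1).sub
    (hφ.const_mul (β₁ / (2 * μ) * Real.exp (-τ / 2)))).congr_deriv (by ring)

theorem tendsto_Dden_atBot : Tendsto (fun ξ => Dden μ β₀ β₁ ξ τ) atBot (𝓝 1) := by
  have hΦ := tendsto_integral_Iio_zero (f := phi0 μ) (μ := volume) tendsto_id
  have hφ := (tendsto_phi0_cocompact hμ).mono_left atBot_le_cocompact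
  simpa [Dden] using ((hΦ.const_mul (β₀ / (2 * μ))).const_sub 1).sub
    (hφ.const_mul (β₁ / (2 * μ) * Real.exp (-τ / 2)))

theorem tendsto_Dden_atTop :
    Tendsto (fun ξ => Dden μ β₀ β₁ ξ τ) atTop (𝓝 (1 - β₀ / (2 * μ))) := by
  have hΦ := tendsto_integral_Iio_atTop (integrable_phi0 hμ)
  have hφ := (tendsto_phi0_cocompact hμ).mono_left atTop_le_cocompact
  rw [integral_phi0 hμ] at hΦ
  simpa [Dden] using ((hΦ.const_mul (β₀ / (2 * μ))).const_sub 1).sub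
    (hφ.const_mul (β₁ / (2 * μ) * Real.exp (-τ / 2)))

end Denominator

/-- with `β₀ = 2μ(1 − e^{−M/(2μ)})`, and for any `β₁, τ` such that the
denominator is strictly positive on `ℝ`, the diffusive N-wave `w_N(·,τ)` is integrable
and has total mass `M` (independent of `τ` and `β₁`). -/
theorem stmt10 (μ M β₀ β₁ τ : ℝ) (hμ : 0 < μ)
    (hβ₀ : β₀ = 2 * μ * (1 - Real.exp (-M / (2 * μ))))
    (hpos : ∀ ξ : ℝ, 0 < Dden μ β₀ β₁ ξ τ) :
    Integrable (fun ξ => wN μ β₀ β₁ ξ τ) ∧ (∫ ξ : ℝ, wN μ β₀ β₁ ξ τ) = M := by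
  have hlim : 1 - β₀ / (2 * μ) = Real.exp (-M / (2 * μ)) := by
    rw [hβ₀]
    field_simp
    ring
  have hnum : Integrable fun ξ =>
      -(β₀ * phi0 μ ξ + β₁ * Real.exp (-τ / 2) * deriv (phi0 μ) ξ) / (2 * μ) :=
    ((((integrable_phi0 hμ).const_mul β₀).add
      ((integrable_deriv_phi0 hμ).const_mul _)).neg).div_const _
  obtain ⟨hint, hintegral⟩ := integrable_div_and_integral_div_eq_log_sub_log
    (hasDerivAt_Dden β₀ β₁ τ hμ) hpos hnum one_pos (Real.exp_pos _)
    (tendsto_Dden_atBot β₀ β₁ τ hμ) (hlim ▸ tendsto_Dden_atTop β₀ β₁ τ hμ)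
  have hwN : (fun ξ => wN μ β₀ β₁ ξ τ) = fun ξ =>
      -(2 * μ) * (-(β₀ * phi0 μ ξ + β₁ * Real.exp (-τ / 2) * deriv (phi0 μ) ξ) / (2 * μ) /
        Dden μ β₀ β₁ ξ τ) := by
    funext ξ
    rw [wN]
    field_simp
  rw [hwN, integral_const_mul, hintegral, Real.log_exp, Real.log_one]
  refine ⟨hint.const_mul _, ?_⟩
  field_simp
  ring
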